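/- arXiv:1905.09572 — 2 statements merged into one kernel-verified Lean document; each statement's English description precedes it below -/
import Mathlib

section
/- For any connected subgraph on k vertices of a graph G, there is exactly one ordering of its vertices that is canonical: start with the minimum-id vertex, and at each step add the smallest-id vertex among those adjacent to an already-chosen vertex subject to the canonicality conditions. Hence each connected vertex set corresponds to at most one canonical embedding. -/
/-- A list of vertex ids is a canonical embedding in `G`. -/
def IsCanonical (G : SimpleGraph ℕ) (l : List ℕ) : Prop :=
  (∀ i : Fin l.length, 0 < (i : ℕ) →
      l.get ⟨0, lt_of_le_of_lt (Nat.zero_le _) i.2⟩ < l.get i) ∧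
  (∀ i : Fin l.length, 0 < (i : ℕ) →
      ∃ j : Fin l.length, (j : ℕ) < (i : ℕ) ∧ G.Adj (l.get j) (l.get i)) ∧
  (∀ a b c : Fin l.length, (a : ℕ) < (b : ℕ) → (b : ℕ) < (c : ℕ) →
      G.Adj (l.get a) (l.get c) →
      (∀ d : Fin l.length, (d : ℕ) < (a : ℕ) → ¬ G.Adj (l.get d) (l.get c)) →
      l.get b < l.get c)

lemma key_le (G : SimpleGraph ℕ) (l₁ l₂ : List ℕ)
    (h₁ : l₁.Nodup) (h₂ : l₂.Nodup) (hS : l₁.toFinset = l₂.toFinset)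
    (hc₁ : IsCanonical G l₁) (hc₂ : IsCanonical G l₂)
    (i : ℕ) (hi : i < l₁.length) (hi' : i < l₂.length)
    (ihp : ∀ j (hj : j < l₁.length) (hj' : j < l₂.length), j < i →
      l₁.get ⟨j, hj⟩ = l₂.get ⟨j, hj'⟩) :
    l₂.get ⟨i, hi'⟩ ≤ l₁.get ⟨i, hi⟩ := by
  classical
  set x := l₁.get ⟨i, hi⟩ with hx
  have hxmem : x ∈ l₂ := by
    have hmem : x ∈ l₁.toFinset := List.mem_toFinset.mpr (l₁.get_mem _)
    rw [hS] at hmem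
    exact List.mem_toFinset.mp hmem
  obtain ⟨j, hj⟩ := List.mem_iff_get.mp hxmem
  rcases lt_trichotomy (j : ℕ) i with hlt | heq | hgt
  · exfalso
    have hjl : (j : ℕ) < l₁.length := lt_trans hlt hi
    have hEq : l₁.get ⟨j, hjl⟩ = l₁.get ⟨i, hi⟩ := by
      rw [ihp j hjl j.2 hlt]
      simpa [hx] using hj
    have := (List.Nodup.get_inj_iff h₁).mp hEq
    have : (j : ℕ) = i := congrArg Fin.val this
    omega
  · have : (⟨i, hi'⟩ : Fin l₂.length) = j := Fin.ext heq.symm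
    rw [this, hj]
  · -- i < j
    rcases Nat.eq_zero_or_pos i with hizero | hipos
    · -- i = 0 : first entry of l₂ is below every later entry
      have hposj : 0 < (j : ℕ) := by omega
      have h0 := hc₂.1 j hposj
      have : (⟨0, lt_of_le_of_lt (Nat.zero_le _) j.2⟩ : Fin l₂.length) = ⟨i, hi'⟩ :=
        Fin.ext (by simp [hizero])
      rw [this] at h0
      rw [← hj]
      exact le_of_lt h0
    · -- i > 0 : use conditions (ii) for l₁ and (iii) for l₂
      obtain ⟨a, ha, hadj⟩ := hc₁.2.1 ⟨i, hi⟩ hipos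
      have ha2 : (a : ℕ) < l₂.length := lt_trans (lt_trans ha hgt) j.2
      have hadj2 : G.Adj (l₂.get ⟨a, ha2⟩) (l₂.get j) := by
        rw [← ihp a a.2 ha2 ha, hj]
        exact hadj
      set P : ℕ → Prop := fun d => ∃ hd : d < l₂.length, G.Adj (l₂.get ⟨d, hd⟩) (l₂.get j)
        with hP
      have hPex : ∃ d, P d := ⟨a, ha2, hadj2⟩
      obtain ⟨hm, hmadj⟩ := Nat.find_spec hPex
      have hma : Nat.find hPex ≤ (a : ℕ) := Nat.find_min' hPex ⟨ha2, hadj2⟩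
      have hmi : Nat.find hPex < i := lt_of_le_of_lt hma ha
      have key := hc₂.2.2 ⟨Nat.find hPex, hm⟩ ⟨i, hi'⟩ j hmi hgt hmadj ?_
      · rw [← hj]
        exact le_of_lt key
      · intro d hd hdadj
        exact Nat.find_min hPex hd ⟨d.2, by simpa using hdadj⟩

theorem stmt_6 (G : SimpleGraph ℕ) (S : Finset ℕ)
    (hconn : (G.induce (S : Set ℕ)).Connected)
    (l₁ l₂ : List ℕ) (h₁ : l₁.Nodup) (h₂ : l₂.Nodup)
    (hS₁ : l₁.toFinset = S) (hS₂ : l₂.toFinset = S)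
    (hc₁ : IsCanonical G l₁) (hc₂ : IsCanonical G l₂) :
    l₁ = l₂ := by
  have hS : l₁.toFinset = l₂.toFinset := hS₁.trans hS₂.symm
  have hlen : l₁.length = l₂.length := by
    rw [← List.toFinset_card_of_nodup h₁, ← List.toFinset_card_of_nodup h₂, hS]
  have main : ∀ i, ∀ (hi : i < l₁.length) (hi' : i < l₂.length),
      l₁.get ⟨i, hi⟩ = l₂.get ⟨i, hi'⟩ := by
    intro i
    induction i using Nat.strong_induction_on with
    | _ i ih =>
      intro hi hi'
      refine le_antisymm ?_ ?_
      · exact key_le G l₂ l₁ h₂ h₁ hS.symm hc₂ hc₁ i hi' hi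
          (fun j hj hj' hji => (ih j hji hj' hj).symm)
      · exact key_le G l₁ l₂ h₁ h₂ hS hc₁ hc₂ i hi hi'
          (fun j hj hj' hji => ih j hji hj hj')
  exact List.ext_get hlen main
end

section
/- The Faddeev–LeVerrier recurrence computes the characteristic polynomial: for an n×n matrix M over a field of characteristic zero, define C₁ = M, c_{n-1} = -tr(C₁), and for k ≥ 2, C_k = M(C_{k-1} + c_{n-k+1} I), c_{n-k} = -tr(C_k)/k. Then det(xI - M) = xⁿ + c_{n-1}x^{n-1} + ... + c₁ x + c₀. -/
open Matrix Polynomial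

/-- The matrices `C_k` of the Faddeev–LeVerrier recurrence:
`C₁ = M`, `C_{k+1} = M * (C_k + c_{n-k} I)` where `c_{n-k} = -tr(C_k)/k`. -/
def faddeevC {K : Type*} [Field K] {n : ℕ}
    (M : Matrix (Fin n) (Fin n) K) : ℕ → Matrix (Fin n) (Fin n) K
  | 0 => 0
  | 1 => M
  | (k + 2) =>
      M * (faddeevC M (k + 1) +
        (-(Matrix.trace (faddeevC M (k + 1))) / ((k + 1 : ℕ) : K)) • (1 : Matrix (Fin n) (Fin n) K))

section FLAux


variable {R : Type*} [CommRing R] {m : Type*} [Fintype m] [DecidableEq m]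

theorem fl_derivative_finset_prod {ι : Type*} [DecidableEq ι] (s : Finset ι) (f : ι → R[X]) :
    derivative (∏ i ∈ s, f i) = ∑ i ∈ s, (∏ j ∈ s.erase i, f j) * derivative (f i) := by
  classical
  induction s using Finset.induction with
  | empty => simp
  | insert a s ha ih =>
    rw [Finset.prod_insert ha, derivative_mul, ih, Finset.sum_insert ha,
      Finset.erase_insert ha, Finset.mul_sum]
    congr 1
    · ring
    · apply Finset.sum_congr rfl
      intro i hi
      rw [Finset.erase_insert_of_ne (by rintro rfl; exact ha hi),
        Finset.prod_insert (fun h => ha (Finset.mem_of_mem_erase h)), mul_assoc]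

theorem fl_derivative_det (A : Matrix m m R[X]) :
    derivative A.det = ∑ i, (A.updateCol i (fun r => derivative (A r i))).det := by
  classical
  simp_rw [det_apply]
  rw [map_sum, Finset.sum_comm]
  apply Finset.sum_congr rfl
  intro σ _
  rw [Units.smul_def, zsmul_eq_mul, derivative_mul, derivative_intCast, zero_mul, zero_add,
    fl_derivative_finset_prod, Finset.mul_sum]
  apply Finset.sum_congr rfl
  intro i _
  rw [Units.smul_def, zsmul_eq_mul]
  congr 1
  rw [← Finset.mul_prod_erase Finset.univ _ (Finset.mem_univ i), updateCol_apply, if_pos rfl]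
  rw [mul_comm (derivative _)]
  congr 1
  apply Finset.prod_congr rfl
  intro j hj
  rw [updateCol_apply, if_neg (Finset.ne_of_mem_erase hj)]

theorem fl_derivative_charpoly (M : Matrix m m R) :
    derivative M.charpoly = Matrix.trace (adjugate (charmatrix M)) := by
  classical
  rw [Matrix.charpoly, fl_derivative_det]
  have h : ∀ i, (fun r => derivative (charmatrix M r i)) = Pi.single i 1 := by
    intro i
    funext r
    rcases eq_or_ne r i with rfl | hri
    · simp
    · rw [charmatrix_apply_ne _ _ _ hri, Pi.single_apply, if_neg hri]
      simp
  have ht : Matrix.trace (adjugate (charmatrix M)) =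
      Matrix.trace (adjugate (charmatrix M)ᵀ) := by
    rw [← adjugate_transpose, Matrix.trace_transpose]
  rw [ht]
  rw [Matrix.trace]
  apply Finset.sum_congr rfl
  intro i _
  rw [h i, Matrix.diag, adjugate_apply, Matrix.updateRow_transpose, Matrix.det_transpose]


section
variable {K : Type*} [Field K] {n : ℕ}

/-- Horner matrices with the true charpoly coefficients. -/
noncomputable def flB (M : Matrix (Fin n) (Fin n) K) : ℕ → Matrix (Fin n) (Fin n) K
  | 0 => 1
  | k + 1 => M * flB M k + (M.charpoly.coeff (n - (k + 1))) • 1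

variable (M : Matrix (Fin n) (Fin n) K)

theorem flB_closed : ∀ m, m ≤ n →
    flB M m = ∑ i ∈ Finset.range (m + 1), M.charpoly.coeff (n - m + i) • M ^ i := by
  intro m
  induction m with
  | zero =>
    intro _
    have h1 : M.charpoly.coeff n = 1 := by
      have := M.charpoly_monic
      have hd : M.charpoly.natDegree = n := by
        simpa using M.charpoly_natDegree_eq_dim
      simpa [hd] using this.coeff_natDegree
    simp [flB, h1]
  | succ m ih =>
    intro hm
    rw [flB, ih (Nat.le_of_succ_le hm), Finset.mul_sum]
    conv_rhs => rw [Finset.sum_range_succ']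
    congr 1
    · apply Finset.sum_congr rfl
      intro i _
      rw [Matrix.mul_smul, ← pow_succ']
      congr 2
      omega

theorem flB_top : flB M n = 0 := by
  rw [flB_closed M n le_rfl]
  have hd : M.charpoly.natDegree = n := by simpa using M.charpoly_natDegree_eq_dim
  have := M.aeval_self_charpoly
  rw [aeval_eq_sum_range, hd] at this
  simpa using this

theorem fl_charmatrix_eq : charmatrix M = (X : K[X]) • 1 - (M.map C) := by
  ext i j
  rcases eq_or_ne i j with rfl | hij
  · simp [Matrix.smul_apply, Matrix.one_apply]
  · simp [charmatrix_apply_ne _ _ _ hij, Matrix.smul_apply, Matrix.one_apply_ne hij,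
      Matrix.map_apply]

theorem fl_map_one : ((1 : Matrix (Fin n) (Fin n) K)).map ⇑(C : K →+* K[X]) = 1 :=
  Matrix.map_one _ (map_zero C) (map_one C)

theorem fl_key : ∀ m : ℕ,
    charmatrix M * ∑ k ∈ Finset.range m, (X : K[X]) ^ (m - 1 - k) • (flB M k).map C =
    (X : K[X]) ^ m • 1 - (flB M m).map C +
      ∑ k ∈ Finset.range m, (Polynomial.C (M.charpoly.coeff (n - 1 - k)) * X ^ (m - 1 - k)) •
        (1 : Matrix (Fin n) (Fin n) K[X]) := by
  intro m
  induction m with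
  | zero =>
    simp only [Finset.range_zero, Finset.sum_empty, mul_zero, pow_zero, one_smul, flB,
      fl_map_one, add_zero, sub_self]
  | succ m ih =>
    have hS : ∑ k ∈ Finset.range (m + 1), (X : K[X]) ^ (m + 1 - 1 - k) • (flB M k).map C =
        (X : K[X]) • (∑ k ∈ Finset.range m, (X : K[X]) ^ (m - 1 - k) • (flB M k).map C) +
          (flB M m).map C := by
      rw [Finset.sum_range_succ, Finset.smul_sum]
      congr 1
      · apply Finset.sum_congr rfl
        intro k hk
        have hkm := Finset.mem_range.mp hk
        rw [smul_smul, ← pow_succ', show m - 1 - k + 1 = m + 1 - 1 - k by omega]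
      · simp
    have hmap : ∀ t : ℕ, ((M.charpoly.coeff t • (1 : Matrix (Fin n) (Fin n) K)).map C) =
        Polynomial.C (M.charpoly.coeff t) • (1 : Matrix (Fin n) (Fin n) K[X]) := by
      intro t
      ext i j
      simp [Matrix.one_apply, apply_ite (C : K → K[X])]
    have hB : charmatrix M * (flB M m).map C =
        (X : K[X]) • (flB M m).map C -
          ((flB M (m + 1)).map C - Polynomial.C (M.charpoly.coeff (n - 1 - m)) • 1) := by
      rw [fl_charmatrix_eq, sub_mul, Matrix.smul_mul, Matrix.one_mul]
      congr 1
      show (M.map C) * (flB M m).map C = _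
      rw [← Matrix.map_mul]
      have : flB M (m + 1) = M * flB M m + (M.charpoly.coeff (n - (m + 1))) • 1 := rfl
      rw [this]
      have hnm : n - (m + 1) = n - 1 - m := by omega
      rw [Matrix.map_add _ (map_add C), hmap, hnm, add_sub_cancel_right]
    have hQ : ∑ k ∈ Finset.range (m + 1),
        (Polynomial.C (M.charpoly.coeff (n - 1 - k)) * X ^ (m + 1 - 1 - k)) •
          (1 : Matrix (Fin n) (Fin n) K[X]) =
        (X : K[X]) • ∑ k ∈ Finset.range m,
          (Polynomial.C (M.charpoly.coeff (n - 1 - k)) * X ^ (m - 1 - k)) •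
            (1 : Matrix (Fin n) (Fin n) K[X]) +
          Polynomial.C (M.charpoly.coeff (n - 1 - m)) • 1 := by
      rw [Finset.sum_range_succ, Finset.smul_sum]
      congr 1
      · apply Finset.sum_congr rfl
        intro k hk
        rw [smul_smul]
        congr 1
        have := Finset.mem_range.mp hk
        rw [show m + 1 - 1 - k = (m - 1 - k) + 1 by omega, pow_succ]
        ring
      · simp
    rw [hS, mul_add, Matrix.mul_smul, ih, hB, hQ]
    rw [smul_add, smul_sub, smul_smul, ← pow_succ']
    abel


theorem fl_charpoly_expand :
    M.charpoly = X ^ n + ∑ j ∈ Finset.range n, Polynomial.C (M.charpoly.coeff j) * X ^ j := by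
  have hd : M.charpoly.natDegree = n := by simpa using M.charpoly_natDegree_eq_dim
  have h1 : M.charpoly.coeff n = 1 := by
    simpa [hd] using M.charpoly_monic.coeff_natDegree
  conv_lhs => rw [M.charpoly.as_sum_range_C_mul_X_pow]
  rw [hd, Finset.sum_range_succ, h1, Polynomial.C_1, one_mul, add_comm]

theorem fl_key_n :
    charmatrix M * ∑ k ∈ Finset.range n, (X : K[X]) ^ (n - 1 - k) • (flB M k).map ⇑(C : K →+* K[X]) =
      M.charpoly • 1 := by
  rw [fl_key M n, flB_top]
  rw [Matrix.map_zero _ (map_zero C), sub_zero]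
  rw [← Finset.sum_smul]
  rw [show ∑ k ∈ Finset.range n, Polynomial.C (M.charpoly.coeff (n - 1 - k)) * X ^ (n - 1 - k) =
      ∑ j ∈ Finset.range n, Polynomial.C (M.charpoly.coeff j) * X ^ j from
    Finset.sum_range_reflect (fun j => Polynomial.C (M.charpoly.coeff j) * X ^ j) n]
  rw [← add_smul, ← fl_charpoly_expand]

theorem fl_adjugate_eq :
    adjugate (charmatrix M) =
      ∑ k ∈ Finset.range n, (X : K[X]) ^ (n - 1 - k) • (flB M k).map ⇑(C : K →+* K[X]) := by
  set S := ∑ k ∈ Finset.range n, (X : K[X]) ^ (n - 1 - k) • (flB M k).map ⇑(C : K →+* K[X])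
  have h1 : charmatrix M * adjugate (charmatrix M) = M.charpoly • 1 := Matrix.mul_adjugate _
  have h3 : charmatrix M * (adjugate (charmatrix M) - S) = 0 := by
    rw [Matrix.mul_sub, h1, fl_key_n, sub_self]
  have h4 : M.charpoly • (adjugate (charmatrix M) - S) = 0 := by
    have h4a : adjugate (charmatrix M) * (charmatrix M * (adjugate (charmatrix M) - S)) = 0 := by
      rw [h3, Matrix.mul_zero]
    rw [← Matrix.mul_assoc, Matrix.adjugate_mul, Matrix.smul_mul, Matrix.one_mul] at h4a
    exact h4a
  have h5 : adjugate (charmatrix M) - S = 0 := by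
    refine Matrix.ext fun i j => ?_
    have h6 : (M.charpoly • (adjugate (charmatrix M) - S)) i j = (0 : Matrix (Fin n) (Fin n) K[X]) i j := by
      rw [h4]
    simp only [Matrix.smul_apply, Matrix.zero_apply, smul_eq_mul] at h6
    rcases mul_eq_zero.mp h6 with h | h
    · exact absurd h (M.charpoly_monic.ne_zero)
    · simpa [Matrix.sub_apply] using h
  rw [← sub_eq_zero]
  exact h5

theorem fl_trace_map (A : Matrix (Fin n) (Fin n) K) :
    Matrix.trace (A.map ⇑(C : K →+* K[X])) = Polynomial.C (Matrix.trace A) := by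
  simp [Matrix.trace, Matrix.map_apply]

theorem fl_deriv_eq_sum :
    derivative M.charpoly =
      ∑ k ∈ Finset.range n, Polynomial.C (Matrix.trace (flB M k)) * X ^ (n - 1 - k) := by
  rw [fl_derivative_charpoly M, fl_adjugate_eq, Matrix.trace_sum]
  apply Finset.sum_congr rfl
  intro k _
  rw [Matrix.trace_smul, fl_trace_map, smul_eq_mul, mul_comm]

theorem fl_trace_flB : ∀ k, k ≤ n →
    Matrix.trace (flB M k) = ((n - k : ℕ) : K) * M.charpoly.coeff (n - k) := by
  intro k hk
  rcases eq_or_lt_of_le hk with rfl | hk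
  · simp [flB_top]
  · have hE := congrArg (fun p => p.coeff (n - 1 - k)) (fl_deriv_eq_sum M)
    simp only [coeff_derivative, finset_sum_coeff, coeff_C_mul, coeff_X_pow] at hE
    rw [Finset.sum_eq_single k] at hE
    · rw [if_pos rfl, mul_one] at hE
      rw [← hE, show n - 1 - k + 1 = n - k by omega,
        show ((n - 1 - k : ℕ) : K) + 1 = ((n - k : ℕ) : K) by
          rw [show n - k = (n - 1 - k) + 1 by omega]; push_cast; ring,
        mul_comm]
    · intro b hb hbk
      rw [if_neg, mul_zero]
      have := Finset.mem_range.mp hb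
      omega
    · intro h
      exact absurd (Finset.mem_range.mpr hk) h

theorem fl_trace_mul : ∀ k, k < n →
    Matrix.trace (M * flB M k) = -(((k + 1 : ℕ)) : K) * M.charpoly.coeff (n - (k + 1)) := by
  intro k hk
  have h1 : flB M (k + 1) = M * flB M k + (M.charpoly.coeff (n - (k + 1))) • 1 := rfl
  have h2 := fl_trace_flB M (k + 1) hk
  rw [h1, Matrix.trace_add, Matrix.trace_smul, Matrix.trace_one] at h2
  have h3 : ((n - (k + 1) : ℕ) : K) = (n : K) - ((k + 1 : ℕ) : K) := by
    rw [Nat.cast_sub hk]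
  rw [h3] at h2
  simp only [smul_eq_mul, Fintype.card_fin] at h2
  linear_combination h2


section
variable (M : Matrix (Fin n) (Fin n) K) [CharZero K]

theorem fl_faddeev : ∀ k, k < n → faddeevC M (k + 1) = M * flB M k := by
  intro k
  induction k with
  | zero =>
    intro _
    show M = M * flB M 0
    rw [show flB M 0 = 1 from rfl, Matrix.mul_one]
  | succ k ih =>
    intro hk
    have hk' : k < n := Nat.lt_of_succ_lt hk
    show M * (faddeevC M (k + 1) +
        (-(Matrix.trace (faddeevC M (k + 1))) / ((k + 1 : ℕ) : K)) • 1) = M * flB M (k + 1)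
    rw [ih hk', fl_trace_mul M k hk']
    have hne : ((k + 1 : ℕ) : K) ≠ 0 := Nat.cast_ne_zero.mpr (Nat.succ_ne_zero k)
    rw [show -(-(((k + 1 : ℕ)) : K) * M.charpoly.coeff (n - (k + 1))) / ((k + 1 : ℕ) : K) =
        M.charpoly.coeff (n - (k + 1)) by push_cast at hne ⊢; field_simp]
    rfl


end
end
end FLAux

/-- Faddeev–LeVerrier: `det(xI - M) = xⁿ + c_{n-1} x^{n-1} + ⋯ + c₀`
with `c_{n-k} = -tr(C_k)/k`. -/
theorem stmt_14 {K : Type*} [Field K] [CharZero K] {n : ℕ}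
    (M : Matrix (Fin n) (Fin n) K) :
    M.charpoly = X ^ n + ∑ j ∈ Finset.range n,
      Polynomial.C (-(Matrix.trace (faddeevC M (n - j))) / ((n - j : ℕ) : K)) * X ^ j := by
  rw [fl_charpoly_expand M]
  congr 1
  apply Finset.sum_congr rfl
  intro j hj
  have hj' : j < n := Finset.mem_range.mp hj
  have hk : n - j = (n - j - 1) + 1 := by omega
  set k := n - j - 1 with hkdef
  have hkn : k < n := by omega
  have hnk : n - (k + 1) = j := by omega
  rw [hk, fl_faddeev M k hkn, fl_trace_mul M k hkn, hnk]
  congr 1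
  have hne : ((k + 1 : ℕ) : K) ≠ 0 := Nat.cast_ne_zero.mpr (Nat.succ_ne_zero k)
  push_cast at hne ⊢
  field_simp
end
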